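/- arXiv:2504.08085 — 3 statements merged into one kernel-verified Lean document; each statement's English description precedes it below -/
import Mathlib

section
/- For every real z and every K > 0, PL(K·e^z)² + 2·PL(K·e^z) ≤ 2K + z², with equality if and only if z = K. -/
open Real

/-- For every real `z` and every `K > 0`,
`PL(K e^z)^2 + 2 PL(K e^z) ≤ 2K + z^2`, with equality iff `z = K`,
where `PL` is the product log (Lambert-W) function on `(0, ∞)`. -/
theorem productLog_quad_bound
    (PL : ℝ → ℝ)
    (hPLpos : ∀ w : ℝ, 0 < w → 0 < PL w)
    (hPL : ∀ w : ℝ, 0 < w → PL w * Real.exp (PL w) = w)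
    (z K : ℝ) (hK : 0 < K) :
    (PL (K * Real.exp z)) ^ 2 + 2 * PL (K * Real.exp z) ≤ 2 * K + z ^ 2 ∧
      ((PL (K * Real.exp z)) ^ 2 + 2 * PL (K * Real.exp z) = 2 * K + z ^ 2 ↔ z = K) := by
  set w := K * Real.exp z with hw
  have hwpos : 0 < w := mul_pos hK (Real.exp_pos z)
  set u := PL w with hu
  have hupos : 0 < u := hPLpos w hwpos
  have huw : u * Real.exp u = w := hPL w hwpos
  have hlog : Real.log u + u = Real.log K + z := by
    have h := congrArg Real.log huw
    rwa [Real.log_mul (ne_of_gt hupos) (Real.exp_ne_zero u), Real.log_exp, hw,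
      Real.log_mul (ne_of_gt hK) (Real.exp_ne_zero z), Real.log_exp] at h
  have hz : z = u + (Real.log u - Real.log K) := by linarith
  have hlogineq : Real.log K - Real.log u ≤ K / u - 1 := by
    have h := Real.log_le_sub_one_of_pos (div_pos hK hupos)
    rwa [Real.log_div (ne_of_gt hK) (ne_of_gt hupos)] at h
  have key : u - K ≤ u * (Real.log u - Real.log K) := by
    have h := mul_le_mul_of_nonneg_left hlogineq (le_of_lt hupos)
    have h2 : u * (K / u - 1) = K - u := by field_simp
    nlinarith
  refine ⟨by rw [hz]; nlinarith [sq_nonneg (Real.log u - Real.log K)], ?_, ?_⟩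
  · intro heq
    rw [hz] at heq
    have ht : Real.log u - Real.log K = 0 := by
      nlinarith [sq_nonneg (Real.log u - Real.log K)]
    have huK : u = K := by
      have h3 : Real.exp (Real.log u) = Real.exp (Real.log K) := by
        rw [sub_eq_zero] at ht; rw [ht]
      rwa [Real.exp_log hupos, Real.exp_log hK] at h3
    rw [hz, ht, huK]; ring
  · intro hzK
    have huK : u = K := by
      have he : u * Real.exp u = K * Real.exp K := by rw [huw, hw, hzK]
      rcases lt_trichotomy u K with h | h | h
      · exfalso
        have : u * Real.exp u < K * Real.exp K := by
          nlinarith [Real.exp_lt_exp.mpr h, Real.exp_pos u, Real.exp_pos K]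
        linarith
      · exact h
      · exfalso
        have : K * Real.exp K < u * Real.exp u := by
          nlinarith [Real.exp_lt_exp.mpr h, Real.exp_pos u, Real.exp_pos K]
        linarith
    nlinarith [huK, hzK]
end

section
/- Fix α > 0, K₃ > 0, K₄ > 0 and γ̃ > 0. The function δ ↦ −γ̃·δ − (1/(2αK₃))·(PL(K₄·e^{−αδ})² + 2·PL(K₄·e^{−αδ})) attains its maximum over ℝ at the unique point δ̂ = (1/α)·(−γ̃·K₃ + log(K₄/(γ̃·K₃))), characterized by the first-order condition γ̃·K₃ = PL(K₄·e^{−αδ̂}), and the maximal value equals γ̃²·K₃/(2α) − γ̃/α − (γ̃/α)·log(K₄/(γ̃·K₃)). -/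
open Real

/-- Auxiliary: the objective expressed as a function of `L = PL(K₄ e^{-αδ})`. -/
noncomputable def cdsG (α K₃ K₄ γt : ℝ) (L : ℝ) : ℝ :=
  -γt * ((Real.log K₄ - Real.log L - L) / α) - (1 / (2 * α * K₃)) * (L ^ 2 + 2 * L)

lemma cdsG_le (α K₃ K₄ γt : ℝ) (hα : 0 < α) (hK₃ : 0 < K₃) (hγt : 0 < γt)
    (L : ℝ) (hL : 0 < L) :
    cdsG α K₃ K₄ γt L + (L - γt * K₃) ^ 2 / (2 * α * K₃) ≤ cdsG α K₃ K₄ γt (γt * K₃) := by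
  set c : ℝ := γt * K₃ with hc
  have hcpos : 0 < c := mul_pos hγt hK₃
  have hαK : (0:ℝ) < 2 * α * K₃ := by positivity
  have hlog : c * (Real.log L - Real.log c) ≤ L - c := by
    have h1 : Real.log (L / c) ≤ L / c - 1 :=
      Real.log_le_sub_one_of_pos (div_pos hL hcpos)
    rw [Real.log_div (ne_of_gt hL) (ne_of_gt hcpos)] at h1
    have h2 := mul_le_mul_of_nonneg_left h1 hcpos.le
    have h3 : c * (L / c - 1) = L - c := by field_simp
    linarith [h3 ▸ h2]
  have hdiff : cdsG α K₃ K₄ γt c - (cdsG α K₃ K₄ γt L + (L - c) ^ 2 / (2 * α * K₃))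
      = (2 * c * (Real.log c - Real.log L) - 2 * (c - L)) / (2 * α * K₃) := by
    unfold cdsG
    rw [hc]
    field_simp
    ring
  have hnum : 0 ≤ 2 * c * (Real.log c - Real.log L) - 2 * (c - L) := by nlinarith
  have h4 := div_nonneg hnum hαK.le
  linarith [hdiff ▸ h4]

/-- Fix `α > 0`, `K₃ > 0`, `K₄ > 0`, `γ̃ > 0`. The function
`δ ↦ -γ̃ δ - (1/(2αK₃)) (PL(K₄ e^{-αδ})² + 2 PL(K₄ e^{-αδ}))` attains its maximum over `ℝ`
at the unique point `δ̂ = (1/α)(-γ̃ K₃ + log (K₄/(γ̃ K₃)))`, characterized by the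
first-order condition `γ̃ K₃ = PL(K₄ e^{-α δ̂})`, and the maximal value equals
`γ̃² K₃/(2α) - γ̃/α - (γ̃/α) log (K₄/(γ̃ K₃))`. -/
theorem cds_optimal_position_complete
    (PL : ℝ → ℝ)
    (hPLpos : ∀ w : ℝ, 0 < w → 0 < PL w)
    (hPL : ∀ w : ℝ, 0 < w → PL w * Real.exp (PL w) = w)
    (α K₃ K₄ γt : ℝ) (hα : 0 < α) (hK₃ : 0 < K₃) (hK₄ : 0 < K₄) (hγt : 0 < γt)
    (f : ℝ → ℝ)
    (hf : ∀ δ : ℝ, f δ = -γt * δ -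
      (1 / (2 * α * K₃)) * ((PL (K₄ * Real.exp (-α * δ))) ^ 2
        + 2 * PL (K₄ * Real.exp (-α * δ))))
    (δhat : ℝ)
    (hδhat : δhat = (1 / α) * (-γt * K₃ + Real.log (K₄ / (γt * K₃)))) :
    (∀ δ : ℝ, f δ ≤ f δhat) ∧
    (∀ δ : ℝ, (∀ δ' : ℝ, f δ' ≤ f δ) → δ = δhat) ∧
    γt * K₃ = PL (K₄ * Real.exp (-α * δhat)) ∧
    f δhat = γt ^ 2 * K₃ / (2 * α) - γt / α - (γt / α) * Real.log (K₄ / (γt * K₃)) := by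
  have hαne : α ≠ 0 := ne_of_gt hα
  have hK₃ne : K₃ ≠ 0 := ne_of_gt hK₃
  set c : ℝ := γt * K₃ with hc
  have hcpos : 0 < c := mul_pos hγt hK₃
  have hαK : (0:ℝ) < 2 * α * K₃ := by positivity
  have hw : ∀ δ : ℝ, 0 < K₄ * Real.exp (-α * δ) :=
    fun δ => mul_pos hK₄ (Real.exp_pos _)
  -- key identity: log L + L = log K₄ - α δ
  have hkey : ∀ δ : ℝ, Real.log (PL (K₄ * Real.exp (-α * δ)))
      + PL (K₄ * Real.exp (-α * δ)) = Real.log K₄ - α * δ := by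
    intro δ
    have hLpos := hPLpos _ (hw δ)
    have h := congrArg Real.log (hPL _ (hw δ))
    rw [Real.log_mul (ne_of_gt hLpos) (Real.exp_ne_zero _), Real.log_exp,
        Real.log_mul (ne_of_gt hK₄) (Real.exp_ne_zero _), Real.log_exp] at h
    linarith
  -- injectivity of x ↦ x eˣ on positives
  have hinj : ∀ a b : ℝ, 0 < a → 0 < b → a * Real.exp a = b * Real.exp b → a = b := by
    intro a b ha hb hab
    by_contra hne
    rcases lt_or_gt_of_ne hne with h | h
    · have : a * Real.exp a < b * Real.exp b :=
        mul_lt_mul h (Real.exp_le_exp.mpr h.le) (Real.exp_pos a) hb.le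
      linarith
    · have : b * Real.exp b < a * Real.exp a :=
        mul_lt_mul h (Real.exp_le_exp.mpr h.le) (Real.exp_pos b) ha.le
      linarith
  have hlogdiv : Real.log (K₄ / c) = Real.log K₄ - Real.log c :=
    Real.log_div (ne_of_gt hK₄) (ne_of_gt hcpos)
  -- the value of w at δhat
  have hwδhat : K₄ * Real.exp (-α * δhat) = c * Real.exp c := by
    have h1 : -α * δhat = c - Real.log K₄ + Real.log c := by
      rw [hδhat, hlogdiv]; field_simp; ring
    rw [h1, Real.exp_add, Real.exp_sub, Real.exp_log hcpos, Real.exp_log hK₄]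
    field_simp
  -- first-order condition
  have hfoc : c = PL (K₄ * Real.exp (-α * δhat)) := by
    have hLpos := hPLpos _ (hw δhat)
    have h : PL (K₄ * Real.exp (-α * δhat)) * Real.exp (PL (K₄ * Real.exp (-α * δhat)))
        = c * Real.exp c := by rw [hPL _ (hw δhat), hwδhat]
    exact (hinj _ _ hLpos hcpos h).symm
  -- the function expressed in terms of L
  have hfg : ∀ δ : ℝ, f δ = cdsG α K₃ K₄ γt (PL (K₄ * Real.exp (-α * δ))) := by
    intro δ
    have hk := hkey δ
    have hδ : δ = (Real.log K₄ - Real.log (PL (K₄ * Real.exp (-α * δ)))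
        - PL (K₄ * Real.exp (-α * δ))) / α := by
      rw [eq_div_iff hαne]; linarith
    rw [hf δ]
    unfold cdsG
    rw [← hδ]
  have hg := fun (L : ℝ) (hL : 0 < L) => cdsG_le α K₃ K₄ γt hα hK₃ hγt L hL
  have hfδhat : f δhat = cdsG α K₃ K₄ γt c := by rw [hfg δhat, ← hfoc]
  refine ⟨?_, ?_, hfoc, ?_⟩
  · intro δ
    have h1 := hg _ (hPLpos _ (hw δ))
    have h2 : 0 ≤ (PL (K₄ * Real.exp (-α * δ)) - c) ^ 2 / (2 * α * K₃) := by positivity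
    rw [hfg δ, hfδhat]
    linarith
  · intro δ hmax
    have h1 := hg _ (hPLpos _ (hw δ))
    have h2 := hmax δhat
    rw [hfg δ] at h2
    rw [hfδhat] at h2
    have h3 : (PL (K₄ * Real.exp (-α * δ)) - c) ^ 2 / (2 * α * K₃) ≤ 0 := by linarith
    have h4 : (PL (K₄ * Real.exp (-α * δ)) - c) ^ 2 ≤ 0 := by
      by_contra h
      push_neg at h
      have := div_pos h hαK
      linarith
    have h5 : PL (K₄ * Real.exp (-α * δ)) = c := by
      have h6 : (PL (K₄ * Real.exp (-α * δ)) - c) ^ 2 = 0 :=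
        le_antisymm h4 (sq_nonneg _)
      have := pow_eq_zero_iff (n := 2) (by norm_num) |>.mp h6
      linarith
    have hk1 := hkey δ
    have hk2 := hkey δhat
    rw [h5] at hk1
    rw [← hfoc] at hk2
    have : α * δ = α * δhat := by linarith
    exact mul_left_cancel₀ hαne this
  · rw [hfδhat]
    unfold cdsG
    rw [hc, ← hc, hlogdiv, hc]
    field_simp
    ring
end

section
/- Let θ̂, δ̂ be defined by δ̂ = (1/(α·v))·(ℓᵀΣ⁻¹(μ − γ̃ℓ − α·σ·aᵀp) + log(γ/γ̃) − α(ψ − g)) and θ̂ = (1/α)·Σ⁻¹(μ − γ̃ℓ − α·σ·aᵀ(p + δ̂·σ_r)), where v = 1 + σ_rᵀaσ⁻¹ℓ with σ the square root of Σ and a invertible. Then under the complete-market specialization with Υ = σ·aᵀ and v ≠ 0, these satisfy the relationship δ̂ = ℓᵀθ̂ + g − ψ + (1/α)·log(γ/γ̃). -/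
open Matrix Real

/-- In the complete-market specialization (`Υ = σ aᵀ`, `v = 1 + σ_rᵀ a σ⁻¹ ℓ ≠ 0`),
the optimal CDS position `δ̂` and equity position `θ̂` satisfy
`δ̂ = ℓᵀ θ̂ + g - ψ + (1/α) log (γ/γ̃)`. -/
theorem cds_equity_position_relation {k : ℕ}
    (Sig σ a : Matrix (Fin k) (Fin k) ℝ)
    (μ ℓ σr p θhat : Fin k → ℝ)
    (g ψ α γ γt v δhat : ℝ)
    (hSig : Sig.PosDef) (hσ : Sig = σ * σ.transpose)
    (hσdet : IsUnit σ.det) (hadet : IsUnit a.det)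
    (hα : 0 < α) (hγ : 0 < γ) (hγt : 0 < γt)
    (hv : v = 1 + σr ⬝ᵥ ((a * σ⁻¹) *ᵥ ℓ)) (hvne : v ≠ 0)
    (hδ : δhat = (1 / (α * v)) *
      (ℓ ⬝ᵥ (Sig⁻¹ *ᵥ (μ - γt • ℓ - α • ((σ * a.transpose) *ᵥ p)))
        + Real.log (γ / γt) - α * (ψ - g)))
    (hθ : θhat = (1 / α) •
      (Sig⁻¹ *ᵥ (μ - γt • ℓ - α • ((σ * a.transpose) *ᵥ (p + δhat • σr))))) :
    δhat = ℓ ⬝ᵥ θhat + g - ψ + (1 / α) * Real.log (γ / γt) := by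
  have hSigInv : Sig⁻¹ * (σ * a.transpose) = (a * σ⁻¹).transpose := by
    rw [hσ, Matrix.mul_inv_rev, ← Matrix.transpose_nonsing_inv, Matrix.mul_assoc,
      ← Matrix.mul_assoc σ⁻¹, Matrix.nonsing_inv_mul σ hσdet, Matrix.one_mul,
      ← Matrix.transpose_mul]
  have hkey : ℓ ⬝ᵥ (Sig⁻¹ *ᵥ ((σ * a.transpose) *ᵥ σr))
      = σr ⬝ᵥ ((a * σ⁻¹) *ᵥ ℓ) := by
    rw [Matrix.mulVec_mulVec, hSigInv, Matrix.dotProduct_mulVec,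
      Matrix.vecMul_transpose, dotProduct_comm]
  set X := ℓ ⬝ᵥ (Sig⁻¹ *ᵥ (μ - γt • ℓ - α • ((σ * a.transpose) *ᵥ p))) with hX
  set s := σr ⬝ᵥ ((a * σ⁻¹) *ᵥ ℓ) with hs
  have hθdot : ℓ ⬝ᵥ θhat = (1 / α) * (X - α * δhat * s) := by
    rw [hθ, hX]
    simp only [Matrix.mulVec_add, Matrix.mulVec_smul, Matrix.mulVec_sub,
      Matrix.smul_mulVec, smul_add, dotProduct_smul, dotProduct_sub,
      dotProduct_add, smul_eq_mul, Pi.sub_apply]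
    rw [← hkey]
    ring
  have hαne : α ≠ 0 := ne_of_gt hα
  rw [hθdot]
  have hδ' : δhat * (α * v) = X + Real.log (γ / γt) - α * (ψ - g) := by
    rw [hδ]; field_simp
  rw [hv] at hδ'
  field_simp
  nlinarith [hδ']
end
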